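/- For any field k and any invertible d×d matrix A over k, consider the linear endomorphism T of M_d(k) given by T(X) = A⁻¹ Xᵀ A. Then Tr(T) = Tr(A⁻¹ Aᵀ). -/

import Mathlib

open Matrix

/-
Computing the trace in the basis of matrix units `Eᵢⱼ`: the map `X ↦ P Xᵀ Q` sends `Eᵢⱼ` to
`P Eⱼᵢ Q`, whose `(i, j)` entry is `Pᵢⱼ Qᵢⱼ`; summing over `i, j` gives `Tr (P Qᵀ)`.
With `P = A⁻¹` and `Q = A` this is the theorem.
-/

namespace Matrix

theorem stdBasis_repr_apply {R m n : Type*} [Semiring R] [Fintype m] [Finite n]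
    (M : Matrix m n R) (i : m) (j : n) : (stdBasis R m n).repr M (i, j) = M i j := by
  simp [stdBasis, Pi.basis_repr, Pi.basisFun_repr]

theorem mul_single_mul_apply {α l m n o : Type*} [NonUnitalNonAssocSemiring α] [Fintype m]
    [Fintype n] [DecidableEq m] [DecidableEq n] (P : Matrix l m α) (Q : Matrix n o α) (i : m)
    (j : n) (c : α) (a : l) (b : o) : (P * single i j c * Q) a b = P a i * c * Q j b := by
  rw [mul_apply, Finset.sum_eq_single j
    (fun x _ hx => by rw [mul_single_apply_of_ne _ _ _ _ _ hx, zero_mul]) (by simp),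
    mul_single_apply_same]

theorem trace_mul_transpose {α m n : Type*} [Fintype m] [Fintype n] [AddCommMonoid α] [Mul α]
    (P Q : Matrix m n α) : trace (P * Qᵀ) = ∑ i, ∑ j, P i j * Q i j := by
  simp [trace, mul_apply]

end Matrix

namespace LinearMap

variable {R n : Type*} [CommRing R] [Fintype n] [DecidableEq n]

theorem trace_matrix_eq_sum_single (T : Matrix n n R →ₗ[R] Matrix n n R) :
    trace R (Matrix n n R) T = ∑ i, ∑ j, T (Matrix.single i j 1) i j := by
  rw [trace_eq_matrix_trace R (stdBasis R n n), Matrix.trace, Fintype.sum_prod_type]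
  simp only [Matrix.diag, toMatrix_apply, stdBasis_eq_single, stdBasis_repr_apply]

theorem trace_eq_trace_mul_transpose_of_apply_eq (P Q : Matrix n n R)
    (T : Matrix n n R →ₗ[R] Matrix n n R) (hT : ∀ X, T X = P * Xᵀ * Q) :
    trace R (Matrix n n R) T = Matrix.trace (P * Qᵀ) := by
  simp [trace_matrix_eq_sum_single, hT, transpose_single, mul_single_mul_apply,
    trace_mul_transpose]

end LinearMap

theorem stmt_13_general {k : Type*} [Field k] (d : ℕ)
    (A : Matrix (Fin d) (Fin d) k)
    (T : Matrix (Fin d) (Fin d) k →ₗ[k] Matrix (Fin d) (Fin d) k)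
    (hT : ∀ X : Matrix (Fin d) (Fin d) k, T X = A⁻¹ * Xᵀ * A) :
    LinearMap.trace k (Matrix (Fin d) (Fin d) k) T = Matrix.trace (A⁻¹ * Aᵀ) :=
  LinearMap.trace_eq_trace_mul_transpose_of_apply_eq A⁻¹ A T hT

theorem stmt_13 {k : Type*} [Field k] (d : ℕ)
    (A : Matrix (Fin d) (Fin d) k) (hA : IsUnit A)
    (T : Matrix (Fin d) (Fin d) k →ₗ[k] Matrix (Fin d) (Fin d) k)
    (hT : ∀ X : Matrix (Fin d) (Fin d) k, T X = A⁻¹ * Xᵀ * A) :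
    LinearMap.trace k (Matrix (Fin d) (Fin d) k) T = Matrix.trace (A⁻¹ * Aᵀ) :=
  stmt_13_general d A T hT
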